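/- (Minimal scale lemma.) Let (Ω, F, P) be a probability space, and fix K ≥ 1, s > 0, β > 0. Suppose (X_n)_{n∈ℕ} is a sequence of nonnegative random variables such that for every n ∈ ℕ there exists a nonnegative random variable Z_n with E[ exp( (Z_n / (K·3^{−nβ}))^s ) ] ≤ 2 and X_n ≤ K + Z_n almost surely. Then there exists a constant C = C(s, β, K) < ∞ such that the random variable M := sup{ 3^n : n ∈ ℕ, X_n ≥ K + 1 } (with the convention M := 0 when the set is empty) satisfies E[ exp( (M/C)^{sβ} ) ] ≤ 2; in particular M < ∞ almost surely. -/

import Mathlib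

/-!
Chernoff's bound gives `P(X_n ≥ K + 1) ≤ P(Z_n ≥ 1) ≤ 2 exp(-c qⁿ)` with `c = K^{-s}` and
`q = 3^{sβ} > 1`. For `C = θ^{-1/(sβ)}` one has `(3ⁿ/C)^{sβ} = θ qⁿ`, and
`exp((M/C)^{sβ}) ≤ 1 + Σ_{n : X_n ≥ K+1} (exp(θ qⁿ) - 1)`: if `M = 3^N` the term `n = N` suffices,
and if `M = ∞` the sum has infinitely many terms bounded away from `0`. Taking expectations,
`E exp((M/C)^{sβ}) ≤ 1 + 2 Σ (exp(θ qⁿ) - 1) exp(-c qⁿ) ≤ 1 + 2θ Σ qⁿ exp(-c qⁿ/2)`, which is at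
most `2` for `θ` small. The dominating sum is integrable, hence finite a.s., and so is `M`.
-/

open MeasureTheory
open scoped ENNReal

noncomputable section

namespace MinimalScale

/-- The exponential on `[0, ∞]`, with `exp ∞ = ∞`. -/
def expE (x : ℝ≥0∞) : ℝ≥0∞ := if x = ⊤ then ⊤ else ENNReal.ofReal (Real.exp x.toReal)

/-- The minimal scale `M(ω) = sup {3^n : X_n(ω) ≥ K + 1}` (`0` if the set is empty),
as a `[0, ∞]`-valued random variable. -/
def minScale {Ω : Type*} (K : ℝ) (X : ℕ → Ω → ℝ) (ω : Ω) : ℝ≥0∞ :=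
  ⨆ (n : ℕ) (_ : K + 1 ≤ X n ω), ((3 : ℝ≥0∞) ^ n)

lemma expE_ofReal {y : ℝ} (hy : 0 ≤ y) :
    expE (ENNReal.ofReal y) = ENNReal.ofReal (Real.exp y) := by
  rw [expE, if_neg ENNReal.ofReal_ne_top, ENNReal.toReal_ofReal hy]

lemma expE_zero : expE 0 = 1 := by simp [expE]

lemma expE_top : expE ⊤ = ⊤ := if_pos rfl

lemma exp_sub_one_le_mul_exp (x : ℝ) : Real.exp x - 1 ≤ x * Real.exp x := by
  have h := Real.add_one_le_exp (-x)
  have hx : Real.exp (-x) * Real.exp x = 1 := by rw [← Real.exp_add, neg_add_cancel, Real.exp_zero]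
  nlinarith [Real.exp_pos x]

lemma mul_exp_neg_mul_le (a x : ℝ) (ha : 0 < a) :
    x * Real.exp (-(a * x)) ≤ 2 / a * Real.exp (-(a / 2 * x)) := by
  have hsplit : Real.exp (-(a * x)) = Real.exp (-(a / 2 * x)) * Real.exp (-(a / 2 * x)) := by
    rw [← Real.exp_add]; ring_nf
  have hbound : a / 2 * x * Real.exp (-(a / 2 * x)) ≤ 1 := by
    have hinv : Real.exp (a / 2 * x) * Real.exp (-(a / 2 * x)) = 1 := by
      rw [← Real.exp_add, add_neg_cancel, Real.exp_zero]
    nlinarith [Real.add_one_le_exp (a / 2 * x), Real.exp_pos (-(a / 2 * x))]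
  rw [hsplit, ← mul_assoc]
  gcongr
  rw [le_div_iff₀ ha]
  linarith

lemma summable_pow_mul_exp_neg_mul_pow {a q : ℝ} (ha : 0 < a) (hq : 1 < q) :
    Summable fun n : ℕ => q ^ n * Real.exp (-(a * q ^ n)) := by
  have hr : Real.exp (-(a / 2 * (q - 1))) < 1 := Real.exp_lt_one_iff.mpr (by nlinarith)
  refine ((summable_geometric_of_lt_one (Real.exp_pos _).le hr).mul_left (2 / a)).of_nonneg_of_le
    (fun n => by positivity) fun n => (mul_exp_neg_mul_le a _ ha).trans ?_
  gcongr
  rw [← Real.exp_nat_mul, Real.exp_le_exp]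
  nlinarith [one_add_mul_sub_le_pow (by linarith : (-1 : ℝ) ≤ q) n]

lemma measure_le_le_two_mul_exp_neg {Ω : Type*} [MeasurableSpace Ω] {P : Measure Ω}
    {Z : Ω → ℝ} (hZ : AEMeasurable Z P) {a s x : ℝ} (ha : 0 < a) (hs : 0 ≤ s) (hx : 0 ≤ x)
    (hint : ∫⁻ ω, ENNReal.ofReal (Real.exp ((Z ω / a) ^ s)) ∂P ≤ 2) :
    P {ω | x ≤ Z ω} ≤ 2 * ENNReal.ofReal (Real.exp (-(x / a) ^ s)) := by
  set ε := ENNReal.ofReal (Real.exp ((x / a) ^ s))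
  have hε : ε ≠ 0 := (ENNReal.ofReal_pos.mpr (Real.exp_pos _)).ne'
  have hsub : {ω | x ≤ Z ω} ⊆ {ω | ε ≤ ENNReal.ofReal (Real.exp ((Z ω / a) ^ s))} := by
    intro ω (hω : x ≤ Z ω)
    exact ENNReal.ofReal_le_ofReal <| Real.exp_le_exp.mpr <|
      Real.rpow_le_rpow (div_nonneg hx ha.le) (div_le_div_of_nonneg_right hω ha.le) hs
  calc P {ω | x ≤ Z ω}
      ≤ (∫⁻ ω, ENNReal.ofReal (Real.exp ((Z ω / a) ^ s)) ∂P) / ε :=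
        (measure_mono hsub).trans (meas_ge_le_lintegral_div (by fun_prop) hε ENNReal.ofReal_ne_top)
    _ ≤ 2 / ε := by gcongr
    _ = 2 * ENNReal.ofReal (Real.exp (-(x / a) ^ s)) := by
        rw [div_eq_mul_inv, Real.exp_neg, ENNReal.ofReal_inv_of_pos (Real.exp_pos _)]

lemma measure_add_one_le_le_two_mul_exp_neg {Ω : Type*} [MeasurableSpace Ω] {P : Measure Ω}
    {X Z : Ω → ℝ} (hZ : AEMeasurable Z P) {K : ℝ} (hXZ : ∀ᵐ ω ∂P, X ω ≤ K + Z ω) {a s : ℝ}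
    (ha : 0 < a) (hs : 0 ≤ s) (hint : ∫⁻ ω, ENNReal.ofReal (Real.exp ((Z ω / a) ^ s)) ∂P ≤ 2) :
    P {ω | K + 1 ≤ X ω} ≤ 2 * ENNReal.ofReal (Real.exp (-(1 / a) ^ s)) := by
  refine le_trans (measure_mono_ae ?_) (measure_le_le_two_mul_exp_neg hZ ha hs zero_le_one hint)
  filter_upwards [hXZ] with ω hω (hX : K + 1 ≤ X ω)
  show 1 ≤ Z ω
  linarith

lemma one_div_mul_three_rpow_rpow {K : ℝ} (hK : 0 < K) (s β : ℝ) (n : ℕ) :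
    (1 / (K * 3 ^ (-(n : ℝ) * β))) ^ s = K ^ (-s) * ((3 : ℝ) ^ (s * β)) ^ n := by
  rw [one_div, mul_inv, Real.mul_rpow (inv_nonneg.mpr hK.le) (by positivity),
    Real.inv_rpow hK.le, ← Real.rpow_neg hK.le, ← Real.rpow_neg (by norm_num),
    ← Real.rpow_mul (by norm_num), ← Real.rpow_mul_natCast (by norm_num)]
  ring_nf

lemma expE_three_pow_div_rpow {C : ℝ} (hC : 0 < C) {t : ℝ} (ht : 0 ≤ t) (n : ℕ) :
    expE (((3 : ℝ≥0∞) ^ n / ENNReal.ofReal C) ^ t) =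
      ENNReal.ofReal (Real.exp (((3 : ℝ) ^ n / C) ^ t)) := by
  rw [← expE_ofReal (by positivity), ← ENNReal.ofReal_rpow_of_nonneg (by positivity) ht,
    ENNReal.ofReal_div_of_pos hC, ENNReal.ofReal_pow (by norm_num)]
  norm_num

lemma expE_iSup_three_pow_le (S : Set ℕ) {C t : ℝ} (hC : 0 < C) (ht : 0 < t) :
    expE (((⨆ n ∈ S, (3 : ℝ≥0∞) ^ n) / ENNReal.ofReal C) ^ t) ≤
      1 + ∑' n, S.indicator (fun n => ENNReal.ofReal (Real.exp (((3 : ℝ) ^ n / C) ^ t) - 1)) n := by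
  set w : ℕ → ℝ≥0∞ := fun n => ENNReal.ofReal (Real.exp (((3 : ℝ) ^ n / C) ^ t) - 1)
  rcases S.eq_empty_or_nonempty with rfl | hne
  · simp [ENNReal.zero_rpow_of_pos ht, expE_zero]
  by_cases hbdd : BddAbove S
  · have hN : sSup S ∈ S := Nat.sSup_mem hne hbdd
    have hsup : ⨆ n ∈ S, (3 : ℝ≥0∞) ^ n = 3 ^ sSup S :=
      le_antisymm (iSup₂_le fun n hn => pow_le_pow_right₀ (by norm_num) (le_csSup hbdd hn))
        (le_iSup₂ (f := fun n (_ : n ∈ S) => (3 : ℝ≥0∞) ^ n) _ hN)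
    calc expE (((⨆ n ∈ S, (3 : ℝ≥0∞) ^ n) / ENNReal.ofReal C) ^ t)
        = 1 + w (sSup S) := by
          rw [hsup, expE_three_pow_div_rpow hC ht.le, ← ENNReal.ofReal_one,
            ← ENNReal.ofReal_add zero_le_one (sub_nonneg.mpr (Real.one_le_exp (by positivity)))]
          ring_nf
      _ ≤ 1 + ∑' n, S.indicator w n := by
          gcongr
          rw [← Set.indicator_of_mem hN w]
          exact ENNReal.le_tsum _
  · have : Infinite S := (Set.infinite_of_not_bddAbove hbdd).to_subtype
    have hw : ∀ n, w 0 ≤ w n := fun n => by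
      simp only [w]
      gcongr
      · norm_num
      · exact Nat.zero_le n
    have hw0 : w 0 ≠ 0 := by
      simp [w, Real.rpow_pos_of_pos (inv_pos.mpr hC)]
    have htop : ∑' n, S.indicator w n = ⊤ := by
      rw [← tsum_subtype, ← top_le_iff, ← ENNReal.tsum_const_eq_top_of_ne_zero (α := S) hw0]
      exact ENNReal.tsum_le_tsum fun n => hw n
    rw [htop, add_top]
    exact le_top

lemma lintegral_one_add_tsum_indicator {Ω ι : Type*} [Countable ι] [MeasurableSpace Ω]
    {P : Measure Ω} [IsProbabilityMeasure P] {B : ι → Set Ω} (hB : ∀ n, MeasurableSet (B n))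
    (w : ι → ℝ≥0∞) :
    ∫⁻ ω, 1 + ∑' n, (B n).indicator (fun _ => w n) ω ∂P = 1 + ∑' n, w n * P (B n) := by
  rw [lintegral_add_left measurable_const, lintegral_one, measure_univ,
    lintegral_tsum fun n => (measurable_const.indicator (hB n)).aemeasurable]
  simp_rw [lintegral_indicator_const (hB _)]

lemma exp_sub_one_mul_exp_neg_mul_le {c θ x : ℝ} (hθ : 0 ≤ θ) (hθc : θ ≤ c / 2) (hx : 0 ≤ x) :
    (Real.exp (θ * x) - 1) * Real.exp (-(c * x)) ≤ θ * (x * Real.exp (-(c / 2 * x))) := by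
  calc (Real.exp (θ * x) - 1) * Real.exp (-(c * x))
      ≤ θ * x * Real.exp (θ * x) * Real.exp (-(c * x)) := by
        gcongr; exact exp_sub_one_le_mul_exp _
    _ = θ * (x * Real.exp (θ * x - c * x)) := by rw [Real.exp_sub, Real.exp_neg]; ring
    _ ≤ θ * (x * Real.exp (-(c / 2 * x))) := by
        gcongr
        nlinarith

lemma tsum_exp_sub_one_mul_le {c θ q : ℝ} (hc : 0 < c) (hq : 1 < q) (hθ : 0 ≤ θ)
    (hθc : θ ≤ c / 2) :
    ∑' n : ℕ, ENNReal.ofReal (Real.exp (θ * q ^ n) - 1) *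
        (2 * ENNReal.ofReal (Real.exp (-(c * q ^ n)))) ≤
      ENNReal.ofReal (2 * θ * ∑' n : ℕ, q ^ n * Real.exp (-(c / 2 * q ^ n))) := by
  have hq0 : ∀ n : ℕ, 0 ≤ q ^ n := fun n => pow_nonneg (by linarith) n
  rw [← tsum_mul_left, ENNReal.ofReal_tsum_of_nonneg (fun n => by have := hq0 n; positivity)
    ((summable_pow_mul_exp_neg_mul_pow (half_pos hc) hq).mul_left _)]
  refine ENNReal.tsum_le_tsum fun n => ?_
  rw [mul_left_comm, ← ENNReal.ofReal_mul' (Real.exp_nonneg _), ← ENNReal.ofReal_ofNat 2,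
    ← ENNReal.ofReal_mul zero_le_two]
  refine ENNReal.ofReal_le_ofReal ?_
  linarith [exp_sub_one_mul_exp_neg_mul_le hθ hθc (hq0 n)]

/-- The rate `θ` of the scale `C = θ^{-1/t}`; the second term of the minimum makes the bound
`2 θ Σ qⁿ exp(-c qⁿ/2)` of `tsum_exp_sub_one_mul_le` at most `1`. -/
def scaleRate (c q : ℝ) : ℝ :=
  min (c / 2) (2 * ∑' n : ℕ, q ^ n * Real.exp (-(c / 2 * q ^ n)) + 1)⁻¹

lemma scaleRate_pos {c q : ℝ} (hc : 0 < c) (hq : 0 ≤ q) : 0 < scaleRate c q :=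
  lt_min (half_pos hc) (inv_pos.mpr (by positivity))

lemma tsum_exp_scaleRate_mul_le_one {c q : ℝ} (hc : 0 < c) (hq : 1 < q) :
    ∑' n : ℕ, ENNReal.ofReal (Real.exp (scaleRate c q * q ^ n) - 1) *
        (2 * ENNReal.ofReal (Real.exp (-(c * q ^ n)))) ≤ 1 := by
  set L := ∑' n : ℕ, q ^ n * Real.exp (-(c / 2 * q ^ n))
  have hL : 0 ≤ L := tsum_nonneg fun n => by have := pow_pos (one_pos.trans hq) n; positivity
  refine (tsum_exp_sub_one_mul_le hc hq (scaleRate_pos hc (by linarith)).le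
    (min_le_left _ _)).trans (ENNReal.ofReal_le_one.mpr ?_)
  have hθ : scaleRate c q ≤ (2 * L + 1)⁻¹ := min_le_right _ _
  calc 2 * scaleRate c q * L ≤ (2 * L + 1)⁻¹ * (2 * L + 1) := by
        nlinarith [mul_le_mul_of_nonneg_right hθ (by positivity : 0 ≤ 2 * L),
          inv_pos.mpr (by positivity : 0 < 2 * L + 1)]
    _ = 1 := inv_mul_cancel₀ (by positivity)

lemma three_pow_div_rpow_neg_inv_rpow {θ t : ℝ} (hθ : 0 < θ) (ht : t ≠ 0) (n : ℕ) :
    ((3 : ℝ) ^ n / θ ^ (-t⁻¹)) ^ t = θ * ((3 : ℝ) ^ t) ^ n := by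
  rw [Real.div_rpow (by positivity) (by positivity), ← Real.rpow_mul hθ.le, neg_mul,
    inv_mul_cancel₀ ht, Real.rpow_neg_one, ← Real.rpow_natCast_mul (by norm_num), mul_comm,
    Real.rpow_mul_natCast (by norm_num), div_inv_eq_mul, mul_comm]

lemma lintegral_one_add_tsum_indicator_le_two {Ω : Type*} [MeasurableSpace Ω] {P : Measure Ω}
    [IsProbabilityMeasure P] {B : ℕ → Set Ω} (hB : ∀ n, MeasurableSet (B n)) {c t : ℝ}
    (hc : 0 < c) (ht : 0 < t)
    (htail : ∀ n, P (B n) ≤ 2 * ENNReal.ofReal (Real.exp (-(c * ((3 : ℝ) ^ t) ^ n)))) :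
    ∫⁻ ω, 1 + ∑' n, (B n).indicator (fun _ => ENNReal.ofReal
      (Real.exp (((3 : ℝ) ^ n / scaleRate c (3 ^ t) ^ (-t⁻¹)) ^ t) - 1)) ω ∂P ≤ 2 := by
  have hq : 1 < (3 : ℝ) ^ t := Real.one_lt_rpow (by norm_num) ht
  rw [lintegral_one_add_tsum_indicator hB]
  refine le_trans ?_ (one_add_one_eq_two (R := ℝ≥0∞)).le
  gcongr
  refine le_trans (ENNReal.tsum_le_tsum fun n => ?_) (tsum_exp_scaleRate_mul_le_one hc hq)
  rw [three_pow_div_rpow_neg_inv_rpow (scaleRate_pos hc (by positivity)) ht.ne']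
  gcongr
  exact htail n

theorem statement11_general {Ω : Type*} [MeasurableSpace Ω] (P : Measure Ω) [IsProbabilityMeasure P]
    (K s β : ℝ) (hK : 1 ≤ K) (hs : 0 < s) (hβ : 0 < β)
    (X : ℕ → Ω → ℝ) (hXm : ∀ n, Measurable (X n))
    (hbound : ∀ n : ℕ, ∃ Z : Ω → ℝ, Measurable Z ∧ (∀ ω, 0 ≤ Z ω) ∧
      (∫⁻ ω, ENNReal.ofReal
          (Real.exp ((Z ω / (K * 3 ^ (-(n : ℝ) * β))) ^ s)) ∂P ≤ 2) ∧
      ∀ᵐ ω ∂P, X n ω ≤ K + Z ω) :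
    ∃ C : ℝ, 0 < C ∧
      (∫⁻ ω, expE ((minScale K X ω / ENNReal.ofReal C) ^ (s * β)) ∂P ≤ 2) ∧
      ∀ᵐ ω ∂P, minScale K X ω < ⊤ := by
  choose Z hZm _ hZint hZae using hbound
  have hK0 : 0 < K := one_pos.trans_le hK
  have ht : 0 < s * β := mul_pos hs hβ
  set B : ℕ → Set Ω := fun n => {ω | K + 1 ≤ X n ω}
  have hB : ∀ n, MeasurableSet (B n) := fun n => measurableSet_le measurable_const (hXm n)
  have htail (n : ℕ) :
      P (B n) ≤ 2 * ENNReal.ofReal (Real.exp (-(K ^ (-s) * (3 ^ (s * β)) ^ n))) := by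
    rw [← one_div_mul_three_rpow_rpow hK0]
    exact measure_add_one_le_le_two_mul_exp_neg (hZm n).aemeasurable (hZae n) (by positivity)
      hs.le (hZint n)
  set C := scaleRate (K ^ (-s)) (3 ^ (s * β)) ^ (-(s * β)⁻¹)
  have hC : 0 < C := Real.rpow_pos_of_pos (scaleRate_pos (by positivity) (by positivity)) _
  set F : Ω → ℝ≥0∞ := fun ω => 1 + ∑' n, (B n).indicator
    (fun _ => ENNReal.ofReal (Real.exp (((3 : ℝ) ^ n / C) ^ (s * β)) - 1)) ω
  have hF : ∫⁻ ω, F ω ∂P ≤ 2 :=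
    lintegral_one_add_tsum_indicator_le_two hB (by positivity) ht htail
  have hdom (ω : Ω) : expE ((minScale K X ω / ENNReal.ofReal C) ^ (s * β)) ≤ F ω :=
    expE_iSup_three_pow_le {n | K + 1 ≤ X n ω} hC ht
  refine ⟨C, hC, (lintegral_mono hdom).trans hF, ?_⟩
  have hFm : Measurable F := by fun_prop (disch := exact hB _)
  filter_upwards [ae_lt_top hFm (hF.trans_lt ENNReal.ofNat_lt_top).ne] with ω hω
  refine lt_top_iff_ne_top.mpr fun hM => (hdom ω).not_gt ?_
  rwa [hM, ENNReal.top_div_of_ne_top ENNReal.ofReal_ne_top, ENNReal.top_rpow_of_pos ht, expE_top]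

/-- Minimal scale lemma. If `X_n ≤ K + O_s(K 3^{-nβ})` for every `n`, then
the random scale `M = sup {3^n : X_n ≥ K + 1}` satisfies `M ≤ O_{sβ}(C)` for some
`C = C(s, β, K)`; in particular `M < ∞` almost surely. -/
theorem statement11 {Ω : Type*} [MeasurableSpace Ω] (P : Measure Ω) [IsProbabilityMeasure P]
    (K s β : ℝ) (hK : 1 ≤ K) (hs : 0 < s) (hβ : 0 < β)
    (X : ℕ → Ω → ℝ) (hXm : ∀ n, Measurable (X n)) (hX0 : ∀ n ω, 0 ≤ X n ω)
    (hbound : ∀ n : ℕ, ∃ Z : Ω → ℝ, Measurable Z ∧ (∀ ω, 0 ≤ Z ω) ∧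
      (∫⁻ ω, ENNReal.ofReal
          (Real.exp ((Z ω / (K * 3 ^ (-(n : ℝ) * β))) ^ s)) ∂P ≤ 2) ∧
      ∀ᵐ ω ∂P, X n ω ≤ K + Z ω) :
    ∃ C : ℝ, 0 < C ∧
      (∫⁻ ω, expE ((minScale K X ω / ENNReal.ofReal C) ^ (s * β)) ∂P ≤ 2) ∧
      ∀ᵐ ω ∂P, minScale K X ω < ⊤ :=
  statement11_general P K s β hK hs hβ X hXm hbound

end MinimalScale
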